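/- arXiv:2204.04273 — 2 statements merged into one kernel-verified Lean document; each statement's English description precedes it below -/
import Mathlib

section
/- Let W ∈ ℝ^{m₁m₂×n₁n₂} and let ℛ(W) = Σ_{i=1}^r σ_i u_i v_iᵀ be a singular value decomposition of its rearrangement, with singular values σ₁ ≥ σ₂ ≥ … ≥ σ_r > 0, orthonormal u_i ∈ ℝ^{m₁n₁}, orthonormal v_i ∈ ℝ^{m₂n₂}, and r = rank(ℛ(W)). For k ≤ r define W_k = Σ_{j=1}^k mat(σ_j u_j) ⊗ mat(v_j), where mat(σ_j u_j) ∈ ℝ^{m₁×n₁} and mat(v_j) ∈ ℝ^{m₂×n₂}. Then W_k minimizes ‖W − Σ_{j=1}^k L^{(j)} ⊗ R^{(j)}‖_F² over all choices of L^{(j)} ∈ ℝ^{m₁×n₁}, R^{(j)} ∈ ℝ^{m₂×n₂}, j = 1,…,k, and the minimal value is ‖W − W_k‖_F² = Σ_{i=k+1}^r σ_i². -/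
open Matrix Kronecker

/-- The rearrangement `ℛ(W) ∈ ℝ^{m₁n₁×m₂n₂}` of `W ∈ ℝ^{m₁m₂×n₁n₂}`, defined entrywise by
`ℛ(W)_{(i₁,j₁),(i₂,j₂)} = W_{(i₁,i₂),(j₁,j₂)}`. -/
def rearrange {m₁ m₂ n₁ n₂ : ℕ} (W : Matrix (Fin m₁ × Fin m₂) (Fin n₁ × Fin n₂) ℝ) :
    Matrix (Fin m₁ × Fin n₁) (Fin m₂ × Fin n₂) ℝ :=
  fun p q => W (p.1, q.1) (p.2, q.2)

/-- The Frobenius norm: the square root of the sum of squared entries. -/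
noncomputable def frob {m n : Type*} [Fintype m] [Fintype n] (A : Matrix m n ℝ) : ℝ :=
  Real.sqrt (∑ i, ∑ j, (A i j) ^ 2)

/-- Matricization of a vector indexed by the pairs `(i₁, j₁) ∈ [m₁]×[n₁]` indexing the rows
(resp. columns) of the rearrangement, producing the matrix in `ℝ^{m₁×n₁}` whose `(i₁,j₁)`
entry is the `(i₁,j₁)` coordinate of the vector. -/
def matPair {a b : ℕ} (y : Fin a × Fin b → ℝ) : Matrix (Fin a) (Fin b) ℝ :=
  fun i j => y (i, j)

/-!
Rearrangement only permutes entries, so it preserves the Frobenius norm, and it turns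
`∑ⱼ L⁽ʲ⁾ ⊗ R⁽ʲ⁾` into the sum of `k` outer products `∑ⱼ vec L⁽ʲ⁾ (vec R⁽ʲ⁾)ᵀ`: the theorem is the
Eckart–Young theorem for `A = ℛ(W) = ∑ σᵢ uᵢ vᵢᵀ`. For the lower bound, let `(w_t)` be an
orthonormal basis of the span `K` of the `vec L⁽ʲ⁾`, so `dim K ≤ k`. Every column of the
approximant `B` lies in `K`, hence, column by column, `‖A - B‖² ≥ ‖A‖² - ∑_t ‖Aᵀ w_t‖²
= ∑ σᵢ² - ∑ σᵢ² cᵢ` with `cᵢ = ∑_t ⟪w_t, uᵢ⟫²`. Bessel's inequality, applied to `(w_t)` and to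
`(uᵢ)`, gives `cᵢ ≤ 1` and `∑ cᵢ ≤ k`, and for nonincreasing `σᵢ²` such weights satisfy
`∑ σᵢ² cᵢ ≤ ∑_{i<k} σᵢ²`.
-/

open Finset

theorem sum_mul_le_sum_of_threshold {τ : Type*} [Fintype τ] {s : Finset τ} {a c : τ → ℝ} {t : ℝ}
    (ht : 0 ≤ t) (has : ∀ i ∈ s, t ≤ a i) (hat : ∀ i ∉ s, a i ≤ t)
    (hc0 : ∀ i, 0 ≤ c i) (hc1 : ∀ i, c i ≤ 1) (hcs : ∑ i, c i ≤ #s) :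
    ∑ i, a i * c i ≤ ∑ i ∈ s, a i := by
  classical
  have hterm : ∀ i, (a i - t) * c i ≤ if i ∈ s then a i - t else 0 := by
    intro i
    split_ifs with hi
    · exact mul_le_of_le_one_right (sub_nonneg.2 (has i hi)) (hc1 i)
    · exact mul_nonpos_of_nonpos_of_nonneg (sub_nonpos.2 (hat i hi)) (hc0 i)
  calc ∑ i, a i * c i = ∑ i, (a i - t) * c i + t * ∑ i, c i := by
        rw [mul_sum, ← sum_add_distrib]; congr 1 with i; ring
    _ ≤ ∑ i, (if i ∈ s then a i - t else 0) + t * #s :=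
        add_le_add (sum_le_sum fun i _ => hterm i) (mul_le_mul_of_nonneg_left hcs ht)
    _ = ∑ i ∈ s, a i := by
        rw [sum_ite_mem, univ_inter, sum_sub_distrib, sum_const, nsmul_eq_mul]; ring

theorem Antitone.sum_mul_le_sum_filter_lt {r k : ℕ} (hk : k ≤ r) {a c : Fin r → ℝ}
    (ha : Antitone a) (ha0 : ∀ i, 0 ≤ a i)
    (hc0 : ∀ i, 0 ≤ c i) (hc1 : ∀ i, c i ≤ 1) (hcs : ∑ i, c i ≤ k) :
    ∑ i, a i * c i ≤ ∑ i ∈ univ.filter (fun i : Fin r => (i : ℕ) < k), a i := by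
  have hcard : #(univ.filter (fun i : Fin r => (i : ℕ) < k)) = k := by
    rw [Fin.card_filter_val_lt, min_eq_right hk]
  refine sum_mul_le_sum_of_threshold (t := if h : k < r then a ⟨k, h⟩ else 0)
    ?_ ?_ ?_ hc0 hc1 (by rwa [hcard])
  · split_ifs <;> simp [ha0]
  · intro i hi
    have hi : (i : ℕ) < k := (mem_filter.1 hi).2
    split_ifs with h
    · exact ha (Fin.le_def.2 hi.le)
    · exact ha0 i
  · intro i hi
    have hi : k ≤ (i : ℕ) := by simpa using hi
    rw [dif_pos (hi.trans_lt i.isLt)]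
    exact ha (Fin.le_def.2 hi)

theorem Finset.sum_filter_lt_add_sum_filter_le {α β M : Type*} [LinearOrder β] [AddCommMonoid M]
    (s : Finset α) (g : α → β) (b : β) (f : α → M) :
    ∑ i ∈ s.filter (fun i => g i < b), f i + ∑ i ∈ s.filter (fun i => b ≤ g i), f i
      = ∑ i ∈ s, f i := by
  simpa only [not_lt] using sum_filter_add_sum_filter_not s (fun i => g i < b) f

theorem Fin.filter_val_lt_eq_map_castLEEmb {r k : ℕ} (hk : k ≤ r) :
    univ.filter (fun i : Fin r => (i : ℕ) < k) = univ.map (Fin.castLEEmb hk) := by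
  ext i
  simp only [mem_filter, mem_univ, true_and, mem_map, Fin.castLEEmb_apply]
  exact ⟨fun hi => ⟨⟨i, hi⟩, rfl⟩, by rintro ⟨j, rfl⟩; exact j.isLt⟩

theorem Orthonormal.norm_sum_smul_sq {E τ : Type*} [NormedAddCommGroup E] [InnerProductSpace ℝ E]
    {w : τ → E} (hw : Orthonormal ℝ w) (a : τ → ℝ) (s : Finset τ) :
    ‖∑ i ∈ s, a i • w i‖ ^ 2 = ∑ i ∈ s, a i ^ 2 := by
  rw [← real_inner_self_eq_norm_sq, hw.inner_sum]
  simp [sq]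

theorem Submodule.norm_sq_sub_sum_inner_sq_le {E : Type*} [NormedAddCommGroup E]
    [InnerProductSpace ℝ E] {K : Submodule ℝ E} [FiniteDimensional ℝ K] {τ : Type*} [Fintype τ]
    (b : OrthonormalBasis τ ℝ K) (x : E) {y : E} (hy : y ∈ K) :
    ‖x‖ ^ 2 - ∑ t, inner ℝ (b t : E) x ^ 2 ≤ ‖x - y‖ ^ 2 := by
  have hproj : ∑ t, inner ℝ (b t : E) x ^ 2 = ‖K.starProjection x‖ ^ 2 := by
    rw [K.starProjection_apply, ← K.coe_norm, ← b.sum_sq_inner_right]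
    simp only [K.inner_orthogonalProjectionOnto_eq_of_mem_left]
  have hmin : ‖x - K.starProjection x‖ ≤ ‖x - y‖ := by
    rw [K.starProjection_minimal]
    exact ciInf_le ⟨0, by rintro _ ⟨z, rfl⟩; positivity⟩ (⟨y, hy⟩ : K)
  have hpyth : ‖x‖ ^ 2 = ‖K.starProjection x‖ ^ 2 + ‖x - K.starProjection x‖ ^ 2 := by
    simpa using K.norm_sq_eq_add_norm_sq_starProjection x
  rw [hproj, hpyth, add_sub_cancel_left]
  gcongr

section Columns

variable {ι κ τ : Type*}

theorem toLp_transpose_sum_vecMulVec (s : Finset τ) (x : τ → ι → ℝ) (y : τ → κ → ℝ) (c : κ) :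
    WithLp.toLp 2 ((∑ i ∈ s, vecMulVec (x i) (y i))ᵀ c) = ∑ i ∈ s, y i c • WithLp.toLp 2 (x i) := by
  ext p
  simp [Matrix.sum_apply, vecMulVec_apply, mul_comm]

theorem toLp_transpose_sum_smul_vecMulVec (u : τ → EuclideanSpace ℝ ι) (v : τ → EuclideanSpace ℝ κ)
    (s : Finset τ) (σ : τ → ℝ) (c : κ) :
    WithLp.toLp 2 ((∑ i ∈ s, σ i • vecMulVec (u i) (v i))ᵀ c) = ∑ i ∈ s, (σ i * v i c) • u i := by
  simp only [← vecMulVec_smul]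
  rw [toLp_transpose_sum_vecMulVec]
  simp

end Columns

section Frobenius

variable {ι κ τ : Type*} [Fintype ι] [Fintype κ]

theorem frob_sq (M : Matrix ι κ ℝ) : frob M ^ 2 = ∑ i, ∑ j, M i j ^ 2 :=
  Real.sq_sqrt (by positivity)

theorem frob_sq_eq_sum_norm_sq_col (M : Matrix ι κ ℝ) :
    frob M ^ 2 = ∑ c, ‖WithLp.toLp 2 (Mᵀ c)‖ ^ 2 := by
  simp only [frob_sq, EuclideanSpace.real_norm_sq_eq, transpose_apply]
  exact sum_comm

theorem frob_sq_sub_sum_sq_inner_le {K : Submodule ℝ (EuclideanSpace ℝ ι)} {ν : Type*}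
    [Fintype ν] (b : OrthonormalBasis ν ℝ K) (M : Matrix ι κ ℝ) {N : Matrix ι κ ℝ}
    (hN : ∀ q, WithLp.toLp 2 (Nᵀ q) ∈ K) :
    frob M ^ 2 - ∑ q, ∑ t, inner ℝ (b t : EuclideanSpace ℝ ι) (WithLp.toLp 2 (Mᵀ q)) ^ 2
      ≤ frob (M - N) ^ 2 := by
  rw [frob_sq_eq_sum_norm_sq_col, frob_sq_eq_sum_norm_sq_col, ← sum_sub_distrib]
  refine sum_le_sum fun q _ => ?_
  have hsub : WithLp.toLp 2 ((M - N)ᵀ q) = WithLp.toLp 2 (Mᵀ q) - WithLp.toLp 2 (Nᵀ q) := by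
    ext p; simp
  rw [hsub]
  exact K.norm_sq_sub_sum_inner_sq_le b _ (hN q)

variable {u : τ → EuclideanSpace ℝ ι} {v : τ → EuclideanSpace ℝ κ}

theorem frob_sq_sum_smul_vecMulVec (hu : Orthonormal ℝ u) (hv : Orthonormal ℝ v)
    (s : Finset τ) (σ : τ → ℝ) :
    frob (∑ i ∈ s, σ i • vecMulVec (u i) (v i)) ^ 2 = ∑ i ∈ s, σ i ^ 2 := by
  simp only [frob_sq_eq_sum_norm_sq_col, toLp_transpose_sum_smul_vecMulVec, hu.norm_sum_smul_sq]
  rw [sum_comm]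
  refine sum_congr rfl fun i _ => ?_
  simp only [mul_pow, ← mul_sum, ← EuclideanSpace.real_norm_sq_eq, hv.norm_eq_one, one_pow, mul_one]

theorem sum_sq_inner_transpose_sum_smul_vecMulVec [Fintype τ] (hv : Orthonormal ℝ v) (σ : τ → ℝ)
    (w : EuclideanSpace ℝ ι) :
    ∑ c, inner ℝ w (WithLp.toLp 2 ((∑ i, σ i • vecMulVec (u i) (v i))ᵀ c)) ^ 2
      = ∑ i, σ i ^ 2 * inner ℝ w (u i) ^ 2 := by
  have hrow : ∀ c, inner ℝ w (WithLp.toLp 2 ((∑ i, σ i • vecMulVec (u i) (v i))ᵀ c))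
      = (∑ i, (σ i * inner ℝ w (u i)) • v i) c := by
    intro c
    simp only [toLp_transpose_sum_smul_vecMulVec, inner_sum, inner_smul_right, WithLp.ofLp_sum,
      WithLp.ofLp_smul, Finset.sum_apply, Pi.smul_apply, smul_eq_mul]
    exact sum_congr rfl fun i _ => by ring
  simp only [hrow, ← EuclideanSpace.real_norm_sq_eq, hv.norm_sum_smul_sq, mul_pow]

end Frobenius

theorem sum_filter_le_frob_sq_sub_sum_vecMulVec {ι κ : Type*} [Fintype ι] [Fintype κ] {r k : ℕ}
    {u : Fin r → EuclideanSpace ℝ ι} {v : Fin r → EuclideanSpace ℝ κ}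
    (hu : Orthonormal ℝ u) (hv : Orthonormal ℝ v) {σ : Fin r → ℝ} (hσ0 : ∀ i, 0 ≤ σ i)
    (hσ : Antitone σ) (hk : k ≤ r) (x : Fin k → ι → ℝ) (y : Fin k → κ → ℝ) :
    ∑ i ∈ univ.filter (fun i : Fin r => k ≤ (i : ℕ)), σ i ^ 2 ≤
      frob (∑ i, σ i • vecMulVec (u i) (v i) - ∑ j, vecMulVec (x j) (y j)) ^ 2 := by
  set A := ∑ i, σ i • vecMulVec (u i) (v i)
  set B := ∑ j, vecMulVec (x j) (y j)
  set K := Submodule.span ℝ (Set.range fun j => WithLp.toLp 2 (x j))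
  set b := stdOrthonormalBasis ℝ K
  set w : Fin (Module.finrank ℝ K) → EuclideanSpace ℝ ι := fun t => b t
  have hw : Orthonormal ℝ w := b.orthonormal.comp_linearIsometry K.subtypeₗᵢ
  set c : Fin r → ℝ := fun i => ∑ t, inner ℝ (w t) (u i) ^ 2
  have hproj : frob A ^ 2 - ∑ i, σ i ^ 2 * c i ≤ frob (A - B) ^ 2 := by
    have hAw : ∑ q, ∑ t, inner ℝ (w t) (WithLp.toLp 2 (Aᵀ q)) ^ 2 = ∑ i, σ i ^ 2 * c i := by
      rw [sum_comm]
      calc _ = ∑ t, ∑ i, σ i ^ 2 * inner ℝ (w t) (u i) ^ 2 :=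
            sum_congr rfl fun t _ => sum_sq_inner_transpose_sum_smul_vecMulVec hv σ _
        _ = ∑ i, σ i ^ 2 * c i := by simp only [c, mul_sum]; exact sum_comm
    rw [← hAw]
    refine frob_sq_sub_sum_sq_inner_le b A fun q => ?_
    rw [toLp_transpose_sum_vecMulVec]
    exact sum_mem fun j _ => K.smul_mem _ (Submodule.subset_span ⟨j, rfl⟩)
  have hc1 : ∀ i, c i ≤ 1 := fun i => by
    simpa [hu.norm_eq_one] using hw.sum_inner_products_le (u i) (s := univ)
  have hcs : ∑ i, c i ≤ k := by
    calc ∑ i, c i = ∑ t, ∑ i, inner ℝ (u i) (w t) ^ 2 := by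
          simp only [c, real_inner_comm (u _)]; exact sum_comm
      _ ≤ ∑ _t, 1 := sum_le_sum fun t _ => by
          simpa [hw.norm_eq_one] using hu.sum_inner_products_le (w t) (s := univ)
      _ ≤ k := by
          simpa [Set.finrank] using finrank_range_le_card (R := ℝ) fun j => WithLp.toLp 2 (x j)
  have hmaj := Antitone.sum_mul_le_sum_filter_lt hk
    (fun i j hij => pow_le_pow_left₀ (hσ0 j) (hσ hij) 2) (fun i => sq_nonneg (σ i))
    (fun i => sum_nonneg fun t _ => sq_nonneg _) hc1 hcs
  have hsplit := sum_filter_lt_add_sum_filter_le univ (fun i : Fin r => (i : ℕ)) k (σ · ^ 2)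
  rw [frob_sq_sum_smul_vecMulVec hu hv] at hproj
  linarith

section Rearrange

variable {m₁ m₂ n₁ n₂ : ℕ}

theorem rearrange_sub (W V : Matrix (Fin m₁ × Fin m₂) (Fin n₁ × Fin n₂) ℝ) :
    rearrange (W - V) = rearrange W - rearrange V := rfl

theorem rearrange_sum {τ : Type*} (s : Finset τ)
    (W : τ → Matrix (Fin m₁ × Fin m₂) (Fin n₁ × Fin n₂) ℝ) :
    rearrange (∑ j ∈ s, W j) = ∑ j ∈ s, rearrange (W j) := by
  ext p q
  simp [rearrange, Matrix.sum_apply]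

theorem rearrange_kronecker (L : Matrix (Fin m₁) (Fin n₁) ℝ)
    (R : Matrix (Fin m₂) (Fin n₂) ℝ) :
    rearrange (L ⊗ₖ R) = vecMulVec (fun p => L p.1 p.2) (fun q => R q.1 q.2) := rfl

theorem rearrange_kronecker_matPair (x : Fin m₁ × Fin n₁ → ℝ)
    (y : Fin m₂ × Fin n₂ → ℝ) : rearrange (matPair x ⊗ₖ matPair y) = vecMulVec x y := rfl

theorem frob_rearrange (W : Matrix (Fin m₁ × Fin m₂) (Fin n₁ × Fin n₂) ℝ) :
    frob (rearrange W) = frob W := by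
  simp only [frob, rearrange, Fintype.sum_prod_type]
  congr 1
  exact sum_congr rfl fun _ _ => sum_comm

end Rearrange

theorem svd_kronecker_truncation_optimal_general {m₁ m₂ n₁ n₂ : ℕ}
    (W : Matrix (Fin m₁ × Fin m₂) (Fin n₁ × Fin n₂) ℝ)
    (r : ℕ)
    (σ : Fin r → ℝ) (hσpos : ∀ i, 0 < σ i)
    (hσmono : ∀ i j : Fin r, i ≤ j → σ j ≤ σ i)
    (u : Fin r → EuclideanSpace ℝ (Fin m₁ × Fin n₁))
    (v : Fin r → EuclideanSpace ℝ (Fin m₂ × Fin n₂))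
    (hu : Orthonormal ℝ u) (hv : Orthonormal ℝ v)
    (hsvd : rearrange W = ∑ i, σ i • vecMulVec (u i) (v i))
    (k : ℕ) (hk : k ≤ r)
    (Wk : Matrix (Fin m₁ × Fin m₂) (Fin n₁ × Fin n₂) ℝ)
    (hWk : Wk = ∑ i ∈ Finset.univ.filter (fun i : Fin r => (i : ℕ) < k),
      matPair (σ i • u i) ⊗ₖ matPair (v i)) :
    IsLeast {e : ℝ | ∃ (Ls : Fin k → Matrix (Fin m₁) (Fin n₁) ℝ)
        (Rs : Fin k → Matrix (Fin m₂) (Fin n₂) ℝ),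
        e = frob (W - ∑ j, Ls j ⊗ₖ Rs j) ^ 2} (frob (W - Wk) ^ 2) ∧
    frob (W - Wk) ^ 2 =
      ∑ i ∈ Finset.univ.filter (fun i : Fin r => k ≤ (i : ℕ)), σ i ^ 2 := by
  have hrWk : rearrange Wk
      = ∑ i ∈ univ.filter (fun i : Fin r => (i : ℕ) < k), σ i • vecMulVec (u i) (v i) := by
    simp only [hWk, rearrange_sum, rearrange_kronecker_matPair, WithLp.ofLp_smul, smul_vecMulVec]
  have hval : frob (W - Wk) ^ 2 = ∑ i ∈ univ.filter (fun i : Fin r => k ≤ (i : ℕ)), σ i ^ 2 := by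
    rw [← frob_rearrange, rearrange_sub, hsvd, hrWk, ← sum_filter_lt_add_sum_filter_le univ
      (fun i : Fin r => (i : ℕ)) k, add_sub_cancel_left]
    exact frob_sq_sum_smul_vecMulVec hu hv _ σ
  refine ⟨⟨⟨fun j => matPair (σ (Fin.castLE hk j) • u (Fin.castLE hk j)),
    fun j => matPair (v (Fin.castLE hk j)), ?_⟩, ?_⟩, hval⟩
  · rw [hWk, Fin.filter_val_lt_eq_map_castLEEmb hk, sum_map]
    rfl
  · rintro _ ⟨Ls, Rs, rfl⟩
    rw [hval, ← frob_rearrange, rearrange_sub, rearrange_sum, hsvd]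
    simp only [rearrange_kronecker]
    exact sum_filter_le_frob_sq_sub_sum_vecMulVec hu hv (fun i => (hσpos i).le) hσmono hk _ _

/-- Optimality of the SVD-based rank-`k` Kronecker product decomposition (Van Loan–Pitsianis):
if `ℛ(W) = Σ_{i=1}^r σ_i u_i v_iᵀ` is an SVD of the rearrangement of `W`, with nonincreasing
positive singular values, orthonormal `u_i`, `v_i` and `r = rank(ℛ(W))`, then for `k ≤ r` the
matrix `W_k = Σ_{j<k} mat(σ_j u_j) ⊗ mat(v_j)` minimizes `‖W − Σ_{j=1}^k L⁽ʲ⁾ ⊗ R⁽ʲ⁾‖_F²`,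
and `‖W − W_k‖_F² = Σ_{i≥k} σ_i²`. -/
theorem svd_kronecker_truncation_optimal {m₁ m₂ n₁ n₂ : ℕ}
    (W : Matrix (Fin m₁ × Fin m₂) (Fin n₁ × Fin n₂) ℝ)
    (r : ℕ) (hr : r = (rearrange W).rank)
    (σ : Fin r → ℝ) (hσpos : ∀ i, 0 < σ i)
    (hσmono : ∀ i j : Fin r, i ≤ j → σ j ≤ σ i)
    (u : Fin r → EuclideanSpace ℝ (Fin m₁ × Fin n₁))
    (v : Fin r → EuclideanSpace ℝ (Fin m₂ × Fin n₂))
    (hu : Orthonormal ℝ u) (hv : Orthonormal ℝ v)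
    (hsvd : rearrange W = ∑ i, σ i • vecMulVec (u i) (v i))
    (k : ℕ) (hk : k ≤ r)
    (Wk : Matrix (Fin m₁ × Fin m₂) (Fin n₁ × Fin n₂) ℝ)
    (hWk : Wk = ∑ i ∈ Finset.univ.filter (fun i : Fin r => (i : ℕ) < k),
      matPair (σ i • u i) ⊗ₖ matPair (v i)) :
    IsLeast {e : ℝ | ∃ (Ls : Fin k → Matrix (Fin m₁) (Fin n₁) ℝ)
        (Rs : Fin k → Matrix (Fin m₂) (Fin n₂) ℝ),
        e = frob (W - ∑ j, Ls j ⊗ₖ Rs j) ^ 2} (frob (W - Wk) ^ 2) ∧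
    frob (W - Wk) ^ 2 =
      ∑ i ∈ Finset.univ.filter (fun i : Fin r => k ≤ (i : ℕ)), σ i ^ 2 :=
  svd_kronecker_truncation_optimal_general W r σ hσpos hσmono u v hu hv hsvd k hk Wk hWk
end

section
/- Let φ₁, φ₂ : ℝ → ℝ be c₁-Lipschitz and c₂-Lipschitz respectively (c₁, c₂ ≥ 0), and for i = 1,…,k let W_L^{(i)} ∈ ℝ^{n₁×m₁}, B_L^{(i)} ∈ ℝ^{n₂×m₁}, W_R^{(i)} ∈ ℝ^{m₂×n₂}, B_R^{(i)} ∈ ℝ^{m₂×m₁}. Define the Kronecker dual layer map f : ℝ^{n₂×n₁} → ℝ^{m₂×m₁} by f(X) = φ₁( Σ_{i=1}^k [ W_R^{(i)} · φ₂( X·W_L^{(i)} + B_L^{(i)} ) + B_R^{(i)} ] ), where φ₁, φ₂ act entrywise. Then f is Lipschitz with constant C = c₁·c₂·Σ_{i=1}^k ‖W_L^{(i)}‖_F·‖W_R^{(i)}‖_F, i.e. ‖f(X₁) − f(X₂)‖_F ≤ C·‖X₁ − X₂‖_F for all X₁, X₂ ∈ ℝ^{n₂×n₁}. -/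
/-!
Entrywise activations are Lipschitz for the Frobenius norm with the same constant, and the
Frobenius norm is submultiplicative, so each summand `X ↦ W_R⁽ⁱ⁾ φ₂(X W_L⁽ⁱ⁾ + B_L⁽ⁱ⁾) + B_R⁽ⁱ⁾`
is `c₂ ‖W_L⁽ⁱ⁾‖_F ‖W_R⁽ⁱ⁾‖_F`-Lipschitz (the biases cancel in differences). The triangle
inequality sums these constants, and the outer `φ₁` multiplies the result by `c₁`.
-/

open Matrix

attribute [local instance] Matrix.frobeniusSeminormedAddCommGroup Matrix.frobeniusNormSMulClass

section Frobenius

variable {l m n p q ι : Type*} [Fintype l] [Fintype m] [Fintype n] [Fintype p] [Fintype q]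

lemma frob_eq_norm (A : Matrix m n ℝ) : frob A = ‖A‖ := by
  rw [frobenius_norm_def, frob, Real.sqrt_eq_rpow]
  congr 1
  refine Finset.sum_congr rfl fun i _ => Finset.sum_congr rfl fun j _ => ?_
  rw [Real.norm_eq_abs, Real.rpow_two, sq_abs]

lemma frob_nonneg (A : Matrix m n ℝ) : 0 ≤ frob A :=
  Real.sqrt_nonneg _

lemma frob_smul (c : ℝ) (A : Matrix m n ℝ) : frob (c • A) = |c| * frob A := by
  rw [frob_eq_norm, frob_eq_norm, norm_smul, Real.norm_eq_abs]

lemma frob_mul_le (A : Matrix l m ℝ) (B : Matrix m n ℝ) : frob (A * B) ≤ frob A * frob B := by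
  simpa only [frob_eq_norm] using frobenius_norm_mul A B

lemma frob_sum_le (s : Finset ι) (A : ι → Matrix m n ℝ) :
    frob (∑ i ∈ s, A i) ≤ ∑ i ∈ s, frob (A i) := by
  simpa only [frob_eq_norm] using norm_sum_le s A

lemma frob_le_frob_of_abs_le {A B : Matrix m n ℝ} (h : ∀ i j, |A i j| ≤ |B i j|) :
    frob A ≤ frob B :=
  Real.sqrt_le_sqrt <| Finset.sum_le_sum fun i _ =>
    Finset.sum_le_sum fun j _ => sq_le_sq.mpr (h i j)

lemma frob_map_sub_map_le {φ : ℝ → ℝ} {c : ℝ} (hc : 0 ≤ c)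
    (hφ : ∀ s t : ℝ, |φ s - φ t| ≤ c * |s - t|) (A B : Matrix m n ℝ) :
    frob (A.map φ - B.map φ) ≤ c * frob (A - B) := by
  calc frob (A.map φ - B.map φ) ≤ frob (c • (A - B)) := by
        refine frob_le_frob_of_abs_le fun i j => ?_
        simpa [abs_mul, abs_of_nonneg hc] using hφ (A i j) (B i j)
    _ = c * frob (A - B) := by rw [frob_smul, abs_of_nonneg hc]

lemma frob_mul_map_mul_add_add_sub_le {φ : ℝ → ℝ} {c : ℝ} (hc : 0 ≤ c)
    (hφ : ∀ s t : ℝ, |φ s - φ t| ≤ c * |s - t|)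
    (WL : Matrix n q ℝ) (BL : Matrix m q ℝ) (WR : Matrix p m ℝ) (BR : Matrix p q ℝ)
    (X₁ X₂ : Matrix m n ℝ) :
    frob ((WR * (X₁ * WL + BL).map φ + BR) - (WR * (X₂ * WL + BL).map φ + BR)) ≤
      c * (frob WL * frob WR) * frob (X₁ - X₂) := by
  have h_inner : (X₁ * WL + BL) - (X₂ * WL + BL) = (X₁ - X₂) * WL := by
    rw [Matrix.sub_mul]; abel
  calc frob ((WR * (X₁ * WL + BL).map φ + BR) - (WR * (X₂ * WL + BL).map φ + BR))
      = frob (WR * ((X₁ * WL + BL).map φ - (X₂ * WL + BL).map φ)) := by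
        rw [add_sub_add_right_eq_sub, Matrix.mul_sub]
    _ ≤ frob WR * (c * frob ((X₁ - X₂) * WL)) := by
        grw [frob_mul_le, ← h_inner, frob_map_sub_map_le hc hφ]
        exact frob_nonneg WR
    _ ≤ frob WR * (c * (frob (X₁ - X₂) * frob WL)) := by
        gcongr
        · exact frob_nonneg WR
        · exact frob_mul_le _ _
    _ = c * (frob WL * frob WR) * frob (X₁ - X₂) := by ring

end Frobenius

/-- The Kronecker dual layer map
`f(X) = φ₁( Σᵢ [ W_R⁽ⁱ⁾ · φ₂( X·W_L⁽ⁱ⁾ + B_L⁽ⁱ⁾ ) + B_R⁽ⁱ⁾ ] )` (activations entrywise)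
is Lipschitz with constant `c₁·c₂·Σᵢ ‖W_L⁽ⁱ⁾‖_F·‖W_R⁽ⁱ⁾‖_F`. -/
theorem kdl_layer_lipschitz {m₁ m₂ n₁ n₂ k : ℕ}
    (φ₁ φ₂ : ℝ → ℝ) (c₁ c₂ : ℝ) (hc₁ : 0 ≤ c₁) (hc₂ : 0 ≤ c₂)
    (hφ₁ : ∀ s t : ℝ, |φ₁ s - φ₁ t| ≤ c₁ * |s - t|)
    (hφ₂ : ∀ s t : ℝ, |φ₂ s - φ₂ t| ≤ c₂ * |s - t|)
    (WL : Fin k → Matrix (Fin n₁) (Fin m₁) ℝ)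
    (BL : Fin k → Matrix (Fin n₂) (Fin m₁) ℝ)
    (WR : Fin k → Matrix (Fin m₂) (Fin n₂) ℝ)
    (BR : Fin k → Matrix (Fin m₂) (Fin m₁) ℝ)
    (f : Matrix (Fin n₂) (Fin n₁) ℝ → Matrix (Fin m₂) (Fin m₁) ℝ)
    (hf : ∀ X, f X = (∑ i, (WR i * (X * WL i + BL i).map φ₂ + BR i)).map φ₁)
    (X₁ X₂ : Matrix (Fin n₂) (Fin n₁) ℝ) :
    frob (f X₁ - f X₂) ≤
      (c₁ * c₂ * ∑ i, frob (WL i) * frob (WR i)) * frob (X₁ - X₂) := by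
  let g (i : Fin k) (X : Matrix (Fin n₂) (Fin n₁) ℝ) := WR i * (X * WL i + BL i).map φ₂ + BR i
  calc frob (f X₁ - f X₂) ≤ c₁ * frob (∑ i, g i X₁ - ∑ i, g i X₂) := by
        rw [hf, hf]; exact frob_map_sub_map_le hc₁ hφ₁ _ _
    _ ≤ c₁ * ∑ i, frob (g i X₁ - g i X₂) := by
        grw [← Finset.sum_sub_distrib, frob_sum_le]
    _ ≤ c₁ * ∑ i, c₂ * (frob (WL i) * frob (WR i)) * frob (X₁ - X₂) := by
        gcongr with i
        exact frob_mul_map_mul_add_add_sub_le hc₂ hφ₂ _ _ _ _ _ _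
    _ = (c₁ * c₂ * ∑ i, frob (WL i) * frob (WR i)) * frob (X₁ - X₂) := by
        rw [← Finset.sum_mul, ← Finset.mul_sum]; ring
end
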